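/- Let 𝒢 = {A_1, …, A_k} ⊂ UT(4,ℤ) with A_i = UT(α_i, β_i, κ_i; δ_i, ε_i, φ_i). Suppose the ℝ-linear span of φ0(A_1), …, φ0(A_k) has dimension 2, and let p, q, r ∈ ℤ, not all zero, satisfy p α_i + q β_i + r κ_i = 0 for i = 1, …, k, with r = 0 and p ≠ 0. Then U_{10} is reachable (some nonempty product of elements of 𝒢 lies in U_{10}) if and only if there exists a nonzero vector ℓ = (ℓ_1, …, ℓ_k) ∈ ℤ≥0^k with Σ_{i=1}^k ℓ_i φ0(A_i) = 0 and Σ_{i=1}^k ℓ_i Δ_i = 0. -/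

import Mathlib

open Finset

/-- The 4×4 upper unitriangular integer matrix `UT(a,b,c;d,e,f)`. -/
def UT (a b c d e f : ℤ) : Matrix (Fin 4) (Fin 4) ℤ :=
  !![1, a, d, f; 0, 1, b, e; 0, 0, 1, c; 0, 0, 0, 1]

/-- `φ0 : UT(4,ℤ) → ℤ³`, `UT(a,b,c;d,e,f) ↦ (a,b,c)`. -/
def phi0 (M : Matrix (Fin 4) (Fin 4) ℤ) : Fin 3 → ℤ :=
  ![M 0 1, M 1 2, M 2 3]

/-- `φ0` followed by the embedding `ℤ³ → ℝ³`. -/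
def phi0R (M : Matrix (Fin 4) (Fin 4) ℤ) : Fin 3 → ℝ :=
  fun i => (phi0 M i : ℝ)

/-- `U_{10} = {UT(0,0,0;0,e,f) : e, f ∈ ℤ}`. -/
def U10 : Set (Matrix (Fin 4) (Fin 4) ℤ) :=
  {M | ∃ e f, M = UT 0 0 0 0 e f}

lemma UT_mul (a b c d e f a' b' c' d' e' f' : ℤ) :
    UT a b c d e f * UT a' b' c' d' e' f' =
      UT (a + a') (b + b') (c + c') (d + a * b' + d') (e + b * c' + e')
        (f + a * e' + d * c' + f') := by
  ext i j
  fin_cases i <;> fin_cases j <;>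
    simp [UT, Matrix.mul_apply, Fin.sum_univ_four, Matrix.vecHead, Matrix.vecTail] <;> ring

theorem stmt17 (k : ℕ) (α β κ δ ε φ : Fin k → ℤ)
    (A : Fin k → Matrix (Fin 4) (Fin 4) ℤ)
    (hA : ∀ i, A i = UT (α i) (β i) (κ i) (δ i) (ε i) (φ i))
    (hdim : Module.finrank ℝ
      (Submodule.span ℝ (Set.range (fun i => phi0R (A i)))) = 2)
    (p q r : ℤ) (hpqr : ¬(p = 0 ∧ q = 0 ∧ r = 0))
    (hrel : ∀ i, p * α i + q * β i + r * κ i = 0)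
    (hr : r = 0) (hp : p ≠ 0) :
    (∃ M ∈ Subsemigroup.closure (Set.range A), M ∈ U10) ↔
      ∃ ℓ : Fin k → ℕ, ℓ ≠ 0 ∧
        (∑ i, (ℓ i : ℤ) • phi0 (A i) = 0) ∧
        ∑ i, (ℓ i : ℚ) * ((δ i : ℚ) - (1 / 2) * (α i : ℚ) * (β i : ℚ)) = 0 := by
  subst hr
  have hphiA : ∀ i, phi0 (A i) = ![α i, β i, κ i] := by
    intro i
    funext j
    rw [hA i]
    fin_cases j <;> simp [phi0, UT]
  -- key product formula
  have key : ∀ w : List (Fin k), w ≠ [] → ∃ d e f,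
      (w.map A).prod =
        UT ((w.map α).sum) ((w.map β).sum) ((w.map κ).sum) d e f ∧
      2 * p * d =
        p * (w.map (fun i => 2 * δ i - α i * β i)).sum - q * ((w.map β).sum) ^ 2 := by
    intro w
    induction w with
    | nil => simp
    | cons i t ih =>
      intro _
      rcases eq_or_ne t [] with rfl | ht
      · refine ⟨δ i, ε i, φ i, by simp [hA i], ?_⟩
        simp only [List.map_cons, List.map_nil, List.sum_cons, List.sum_nil, add_zero]
        linear_combination (β i) * hrel i
      · obtain ⟨d, e, f, hprod, hd⟩ := ih ht
        refine ⟨δ i + α i * (t.map β).sum + d,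
          ε i + β i * (t.map κ).sum + e,
          φ i + α i * e + δ i * (t.map κ).sum + f, ?_, ?_⟩
        · rw [List.map_cons, List.prod_cons, hprod, hA i, UT_mul]
          simp [List.map_cons, List.sum_cons]
        · simp only [List.map_cons, List.sum_cons]
          linear_combination hd + (β i + 2 * (t.map β).sum) * hrel i
  -- counting lemma
  have sumCount : ∀ (w : List (Fin k)) (g : Fin k → ℤ),
      ∑ i, (w.count i : ℤ) * g i = (w.map g).sum := by
    intro w g
    induction w with
    | nil => simp
    | cons a t ih =>
      rw [List.map_cons, List.sum_cons, ← ih]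
      have hterm : ∀ i ∈ Finset.univ, ((a :: t).count i : ℤ) * g i =
          (if i = a then g i else 0) + (t.count i : ℤ) * g i := by
        intro i _
        rcases eq_or_ne i a with rfl | h
        · simp [List.count_cons_self]; ring
        · simp [List.count_cons_of_ne h.symm, h]
      rw [Finset.sum_congr rfl hterm, Finset.sum_add_distrib,
        Finset.sum_ite_eq' Finset.univ a g]
      simp
  constructor
  · rintro ⟨M, hM, e', f', hMU⟩
    have hrep : ∃ w : List (Fin k), w ≠ [] ∧ M = (w.map A).prod := by
      clear hMU
      induction hM using Subsemigroup.closure_induction with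
      | mem x hx =>
        obtain ⟨i, rfl⟩ := hx
        exact ⟨[i], by simp, by simp⟩
      | mul x y hx hy px py =>
        obtain ⟨w1, h1, rfl⟩ := px
        obtain ⟨w2, h2, rfl⟩ := py
        exact ⟨w1 ++ w2, by simp [h1], by rw [List.map_append, List.prod_append]⟩
    obtain ⟨w, hw, rfl⟩ := hrep
    obtain ⟨d, e, f, hprod, hid⟩ := key w hw
    have hEq := hprod.symm.trans hMU
    have hSα : (w.map α).sum = 0 := by
      have := congrFun (congrFun hEq 0) 1; simpa [UT] using this
    have hSβ : (w.map β).sum = 0 := by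
      have := congrFun (congrFun hEq 1) 2; simpa [UT] using this
    have hSκ : (w.map κ).sum = 0 := by
      have := congrFun (congrFun hEq 2) 3; simpa [UT] using this
    have hD : d = 0 := by
      have := congrFun (congrFun hEq 0) 2; simpa [UT] using this
    have hS2 : (w.map (fun i => 2 * δ i - α i * β i)).sum = 0 := by
      rw [hD, hSβ] at hid
      have : p * (w.map (fun i => 2 * δ i - α i * β i)).sum = 0 := by
        linarith [hid]
      rcases mul_eq_zero.mp this with h | h
      · exact absurd h hp
      · exact h
    refine ⟨fun i => w.count i, ?_, ?_, ?_⟩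
    · obtain ⟨a, ha⟩ := List.exists_mem_of_ne_nil w hw
      intro h0
      have := congrFun h0 a
      simp only [Pi.zero_apply] at this
      have := List.count_pos_iff.mpr ha
      omega
    · funext j
      rw [Finset.sum_apply, Pi.zero_apply]
      have : ∀ i, ((w.count i : ℤ) • phi0 (A i)) j = (w.count i : ℤ) * (![α i, β i, κ i] j) := by
        intro i; rw [hphiA i]; simp
      rw [Finset.sum_congr rfl fun i _ => this i]
      fin_cases j
      · simpa using (sumCount w α).trans hSα
      · simpa using (sumCount w β).trans hSβ
      · simpa using (sumCount w κ).trans hSκ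
    · have hz : ∑ i, (w.count i : ℤ) * (2 * δ i - α i * β i) = 0 :=
        (sumCount w _).trans hS2
      have hq : ((∑ i, (w.count i : ℤ) * (2 * δ i - α i * β i) : ℤ) : ℚ) = 0 := by
        rw [hz]; norm_num
      push_cast at hq
      have hfac : ∀ i ∈ Finset.univ, ((w.count i : ℚ)) * ((δ i : ℚ) - (1 / 2) * (α i : ℚ) * (β i : ℚ)) =
          (1 / 2) * ((w.count i : ℚ) * (2 * (δ i : ℚ) - (α i : ℚ) * (β i : ℚ))) := by
        intro i _; ring
      rw [Finset.sum_congr rfl hfac, ← Finset.mul_sum, hq, mul_zero]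
  · rintro ⟨ℓ, hℓ, hphi, hQ⟩
    set w : List (Fin k) := (List.finRange k).flatMap (fun i => List.replicate (ℓ i) i) with hwdef
    have hcount : ∀ j, w.count j = ℓ j := by
      intro j
      rw [hwdef, List.count_flatMap]
      simp only [Function.comp_def]
      have : ((List.finRange k).map fun i => List.count j (List.replicate (ℓ i) i)).sum
          = ∑ i, if i = j then ℓ i else 0 := by
        rw [Fin.sum_univ_def]
        congr 1
        apply List.map_congr_left
        intro i _
        rw [List.count_replicate]
        simp [beq_iff_eq]
      rw [this, Finset.sum_ite_eq' Finset.univ j ℓ]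
      simp
    have hw : w ≠ [] := by
      intro h
      apply hℓ
      funext j
      have := hcount j
      rw [h] at this
      simpa using this.symm
    have hmapsum : ∀ g : Fin k → ℤ, (w.map g).sum = ∑ i, (ℓ i : ℤ) * g i := by
      intro g
      rw [← sumCount w g]
      exact Finset.sum_congr rfl fun i _ => by rw [hcount i]
    -- components of the phi0 condition
    have hcomp : ∀ j : Fin 3, ∑ i, (ℓ i : ℤ) * (![α i, β i, κ i] j) = 0 := by
      intro j
      have := congrFun hphi j
      rw [Finset.sum_apply, Pi.zero_apply] at this
      rw [← this]
      exact Finset.sum_congr rfl fun i _ => by rw [hphiA i]; simp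
    have hα : ∑ i, (ℓ i : ℤ) * α i = 0 := by simpa using hcomp 0
    have hβ : ∑ i, (ℓ i : ℤ) * β i = 0 := by simpa using hcomp 1
    have hκ : ∑ i, (ℓ i : ℤ) * κ i = 0 := by simpa using hcomp 2
    have hz : ∑ i, (ℓ i : ℤ) * (2 * δ i - α i * β i) = 0 := by
      have hq2 : ∑ i, (ℓ i : ℚ) * (2 * (δ i : ℚ) - (α i : ℚ) * (β i : ℚ)) = 0 := by
        have hfac : ∀ i ∈ Finset.univ, (ℓ i : ℚ) * (2 * (δ i : ℚ) - (α i : ℚ) * (β i : ℚ)) =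
            2 * ((ℓ i : ℚ) * ((δ i : ℚ) - (1 / 2) * (α i : ℚ) * (β i : ℚ))) := by
          intro i _; ring
        rw [Finset.sum_congr rfl hfac, ← Finset.mul_sum, hQ, mul_zero]
      have : ((∑ i, (ℓ i : ℤ) * (2 * δ i - α i * β i) : ℤ) : ℚ) = 0 := by
        push_cast
        exact hq2
      exact_mod_cast this
    obtain ⟨d, e, f, hprod, hid⟩ := key w hw
    have hSα : (w.map α).sum = 0 := (hmapsum α).trans hα
    have hSβ : (w.map β).sum = 0 := (hmapsum β).trans hβ
    have hSκ : (w.map κ).sum = 0 := (hmapsum κ).trans hκ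
    have hS2 : (w.map (fun i => 2 * δ i - α i * β i)).sum = 0 :=
      (hmapsum _).trans hz
    have hD : d = 0 := by
      rw [hSβ, hS2] at hid
      have h2pd : 2 * p * d = 0 := by linarith [hid]
      rcases mul_eq_zero.mp h2pd with h | h
      · rcases mul_eq_zero.mp h with h' | h'
        · norm_num at h'
        · exact absurd h' hp
      · exact h
    have hcl : ∀ v : List (Fin k), v ≠ [] →
        (v.map A).prod ∈ Subsemigroup.closure (Set.range A) := by
      intro v
      induction v with
      | nil => simp
      | cons i t ih =>
        intro _
        rcases eq_or_ne t [] with rfl | ht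
        · simp only [List.map_cons, List.map_nil, List.prod_cons, List.prod_nil, mul_one]
          exact Subsemigroup.subset_closure (Set.mem_range_self i)
        · rw [List.map_cons, List.prod_cons]
          exact mul_mem (Subsemigroup.subset_closure (Set.mem_range_self i)) (ih ht)
    refine ⟨(w.map A).prod, hcl w hw, e, f, ?_⟩
    rw [hprod, hSα, hSβ, hSκ, hD]
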